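/- Let Δ be a finite acyclic quiver, M a representation of Δ, E = End(M)^op its opposite endomorphism ring, so that each M_i is an E-module. Suppose M is endo-finite, i.e., M has finite length as an E-module. Then for any finite-dimensional representation X of Δ with dimension vector x, both Hom_Δ(X,M) and Ext¹_Δ(X,M) have finite length as E-modules, and |Hom(X,M)|_E − |Ext¹(X,M)|_E = Σ_i x_i·|M_i|_E − Σ_α x_{s(α)}·|M_{t(α)}|_E. -/

import Mathlib

set_option synthInstance.maxHeartbeats 1000000
set_option maxHeartbeats 1000000

/-- A finite quiver: finite sets of vertices and arrows with source and target maps. -/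
structure FinQuiver where
  V : Type
  A : Type
  [fintypeV : Fintype V]
  [fintypeA : Fintype A]
  [decEqV : DecidableEq V]
  s : A → V
  t : A → V

attribute [instance] FinQuiver.fintypeV FinQuiver.fintypeA FinQuiver.decEqV

/-- A finite quiver is acyclic (has no oriented cycles) iff its vertices admit a
grading strictly increasing along arrows. -/
def FinQuiver.Acyclic (Q : FinQuiver) : Prop :=
  ∃ f : Q.V → ℕ, ∀ a : Q.A, f (Q.s a) < f (Q.t a)

/-- A representation of a quiver over a field `k`: a vector space at each vertex and a
linear map along each arrow. -/
structure QRep (k : Type) [Field k] (Q : FinQuiver) where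
  M : Q.V → Type
  [acg : ∀ i, AddCommGroup (M i)]
  [mod : ∀ i, Module k (M i)]
  map : ∀ a : Q.A, M (Q.s a) →ₗ[k] M (Q.t a)

attribute [instance] QRep.acg QRep.mod

variable {k : Type} [Field k] {Q : FinQuiver}

/-- The (Jordan–Hölder) length of a module: the supremum of the lengths of chains of
submodules. -/
noncomputable def mlength (R M : Type*) [Ring R] [AddCommGroup M] [Module R M] : ℕ∞ :=
  Order.height (⊤ : Submodule R M)

/-- The dimension vector of a representation. -/
noncomputable def dimVec (X : QRep k Q) : Q.V → ℤ :=
  fun i => (Module.finrank k (X.M i) : ℤ)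

/-- The endomorphism algebra of a representation, as a subalgebra of
`Π i, End_k(M_i)`: the families of linear maps commuting with all arrow maps.
(The vertex spaces `M_i` are naturally left modules over this algebra; this is the
Lean rendering of the right action of `End(M)`, i.e. of left modules over
`E(M) = End(M)^op`.) -/
def REnd (M : QRep k Q) : Subalgebra k (∀ i, Module.End k (M.M i)) where
  carrier := {f | ∀ a, (f (Q.t a)) ∘ₗ (M.map a) = (M.map a) ∘ₗ (f (Q.s a))}
  add_mem' := by
    intro f g hf hg a
    ext x
    simp only [Pi.add_apply, LinearMap.add_comp, LinearMap.comp_add, hf a, hg a]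
  mul_mem' := by
    intro f g hf hg a
    have hf' := hf a
    have hg' := hg a
    ext x
    have h1 := LinearMap.congr_fun hg' x
    have h2 := LinearMap.congr_fun hf' ((g (Q.s a)) x)
    simp only [LinearMap.comp_apply, Pi.mul_apply, Module.End.mul_apply] at *
    rw [h1, h2]
  algebraMap_mem' := by
    intro c a
    ext x
    simp [Module.algebraMap_end_apply]

/-- Each vertex space of a representation is a module over the endomorphism ring. -/
noncomputable instance rendModule (M : QRep k Q) (i : Q.V) : Module (REnd M) (M.M i) :=
  Module.compHom _ ((Pi.evalRingHom (fun j => Module.End k (M.M j)) i).comp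
    (REnd M).val.toRingHom)

theorem rend_smul_def (M : QRep k Q) (i : Q.V) (e : REnd M) (x : M.M i) :
    e • x = (e.val i) x := rfl

instance (M : QRep k Q) (i : Q.V) : SMulCommClass k (REnd M) (M.M i) :=
  ⟨fun c e x => ((e.val i).map_smul c x).symm⟩

/-- The map `δ_{XM}`, as a homomorphism of modules over the endomorphism ring of `M`.
Its kernel is `Hom(X,M)` and its cokernel is `Ext¹(X,M)`, as `E(M)`-modules. -/
noncomputable def deltaE (X M : QRep k Q) :
    (∀ i, X.M i →ₗ[k] M.M i) →ₗ[REnd M] (∀ a : Q.A, X.M (Q.s a) →ₗ[k] M.M (Q.t a)) where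
  toFun f := fun a => (f (Q.t a)).comp (X.map a) - (M.map a).comp (f (Q.s a))
  map_add' f g := by
    funext a
    ext x
    simp only [Pi.add_apply, LinearMap.add_comp, LinearMap.comp_add, LinearMap.sub_apply,
      LinearMap.add_apply, LinearMap.comp_apply]
    abel
  map_smul' e f := by
    funext a
    ext x
    have h := LinearMap.congr_fun (e.property a) ((f (Q.s a)) x)
    simp only [LinearMap.comp_apply] at h
    simp only [RingHom.id_apply, Pi.smul_apply, LinearMap.sub_apply, LinearMap.comp_apply,
      LinearMap.smul_apply, rend_smul_def, smul_sub]
    change (e.val (Q.t a)) ((f (Q.t a)) ((X.map a) x)) -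
      (M.map a) ((e.val (Q.s a)) ((f (Q.s a)) x)) = _
    rw [← h]

/-!
With `E = End(M)`, a `k`-basis of `X_i` identifies `Hom_k(X_i, M_j)` with `M_j ^ dim X_i` as
`E`-modules, so it has `E`-length `x_i * |M_j|_E`. `Hom(X,M)` and `Ext¹(X,M)` are the kernel and
cokernel of the `E`-linear map `δ : ⊕_i Hom_k(X_i, M_i) → ⊕_α Hom_k(X_{s α}, M_{t α})` between
modules of finite length, and length is additive along `0 → ker δ → _ → _ → coker δ → 0`.
-/

theorem mlength_eq_length (R N : Type*) [Ring R] [AddCommGroup N] [Module R N] :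
    mlength R N = Module.length R N :=
  (Module.length_eq_height R N).symm

/-- Stated without subtraction, so that it holds in `ℕ∞` with no finiteness assumption. -/
theorem LinearMap.length_ker_add_length_eq {R A B : Type*} [Ring R] [AddCommGroup A] [Module R A]
    [AddCommGroup B] [Module R B] (f : A →ₗ[R] B) :
    Module.length R (LinearMap.ker f) + Module.length R B =
      Module.length R A + Module.length R (B ⧸ LinearMap.range f) := by
  have length_domain : Module.length R A =
      Module.length R (LinearMap.ker f) + Module.length R (LinearMap.range f) :=
    Module.length_eq_add_of_exact _ f.rangeRestrict (Submodule.injective_subtype _)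
      f.surjective_rangeRestrict (fun x => by simp [← Subtype.coe_inj])
  have length_codomain : Module.length R B =
      Module.length R (LinearMap.range f) + Module.length R (B ⧸ LinearMap.range f) :=
    Module.length_eq_add_of_exact _ _ (Submodule.injective_subtype _)
      (Submodule.mkQ_surjective _) (LinearMap.exact_subtype_mkQ _)
  rw [length_domain, length_codomain, add_assoc]

theorem LinearMap.exists_length_ker_coker_eq {R A B : Type*} [Ring R] [AddCommGroup A]
    [Module R A] [AddCommGroup B] [Module R B] (f : A →ₗ[R] B) {m n : ℕ}
    (hA : Module.length R A = m) (hB : Module.length R B = n) :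
    ∃ h e : ℕ, Module.length R (LinearMap.ker f) = h ∧
      Module.length R (B ⧸ LinearMap.range f) = e ∧ h + n = m + e := by
  obtain ⟨h, hh⟩ := ENat.ne_top_iff_exists.mp <| ne_top_of_le_ne_top (hA ▸ ENat.natCast_ne_top m)
    (Module.length_le_of_injective _ (Submodule.injective_subtype (LinearMap.ker f)))
  obtain ⟨e, he⟩ := ENat.ne_top_iff_exists.mp <| ne_top_of_le_ne_top (hB ▸ ENat.natCast_ne_top n)
    (Module.length_le_of_surjective _ (Submodule.mkQ_surjective (LinearMap.range f)))
  refine ⟨h, e, hh.symm, he.symm, ?_⟩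
  have euler := f.length_ker_add_length_eq
  rw [← hh, ← he, hA, hB] at euler
  exact_mod_cast euler

theorem Module.length_linearMap_eq_finrank_mul (k E V N : Type*) [Ring k] [StrongRankCondition k]
    [Ring E] [AddCommGroup V] [Module k V] [Module.Free k V] [Module.Finite k V]
    [AddCommGroup N] [Module k N] [Module E N] [SMulCommClass k E N] :
    Module.length E (V →ₗ[k] N) = Module.finrank k V * Module.length E N := by
  rw [← ((Module.finBasis k V).constr E).length_eq, Module.length_pi, ENat.card_eq_coe_natCard,
    Nat.card_eq_fintype_card, Fintype.card_fin]

theorem endo_length_hom_sub_ext_general (k : Type) [Field k] (Q : FinQuiver)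
    (M : QRep k Q)
    (X : QRep k Q) [∀ i, FiniteDimensional k (X.M i)]
    (d : Q.V → ℕ) (hd : ∀ i, mlength (REnd M) (M.M i) = (d i : ℕ∞)) :
    IsFiniteLength (REnd M) (LinearMap.ker (deltaE X M)) ∧
    IsFiniteLength (REnd M)
      ((∀ a : Q.A, X.M (Q.s a) →ₗ[k] M.M (Q.t a)) ⧸ LinearMap.range (deltaE X M)) ∧
    ∃ h e : ℕ,
      mlength (REnd M) (LinearMap.ker (deltaE X M)) = (h : ℕ∞) ∧
      mlength (REnd M)
        ((∀ a : Q.A, X.M (Q.s a) →ₗ[k] M.M (Q.t a)) ⧸ LinearMap.range (deltaE X M)) =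
        (e : ℕ∞) ∧
      (h : ℤ) - (e : ℤ) = (∑ i : Q.V, dimVec X i * (d i : ℤ)) -
        ∑ a : Q.A, dimVec X (Q.s a) * (d (Q.t a) : ℤ) := by
  have hom_length (i j : Q.V) : Module.length (REnd M) (X.M i →ₗ[k] M.M j) =
      (Module.finrank k (X.M i) * d j : ℕ) := by
    rw [Module.length_linearMap_eq_finrank_mul, ← mlength_eq_length, hd, Nat.cast_mul]
  have length_vertices : Module.length (REnd M) (∀ i, X.M i →ₗ[k] M.M i) =
      (∑ i, Module.finrank k (X.M i) * d i : ℕ) := by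
    refine (Module.length_pi_of_fintype _ fun i => X.M i →ₗ[k] M.M i).trans ?_
    simp only [hom_length, Nat.cast_sum]
  have length_arrows : Module.length (REnd M) (∀ a : Q.A, X.M (Q.s a) →ₗ[k] M.M (Q.t a)) =
      (∑ a, Module.finrank k (X.M (Q.s a)) * d (Q.t a) : ℕ) := by
    refine (Module.length_pi_of_fintype _ fun a => X.M (Q.s a) →ₗ[k] M.M (Q.t a)).trans ?_
    simp only [hom_length, Nat.cast_sum]
  obtain ⟨h, e, hh, he, euler⟩ :=
    (deltaE X M).exists_length_ker_coker_eq length_vertices length_arrows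
  refine ⟨Module.length_ne_top_iff.mp (hh ▸ ENat.natCast_ne_top h),
    Module.length_ne_top_iff.mp (he ▸ ENat.natCast_ne_top e), h, e,
    by rw [mlength_eq_length, hh], by rw [mlength_eq_length, he], ?_⟩
  zify at euler
  simp only [dimVec]
  linarith

/-- for an endo-finite representation `M` with `E = End(M)` and a
finite-dimensional representation `X`, both `Hom(X,M)` (the kernel of `δ_{XM}`) and
`Ext¹(X,M)` (its cokernel) have finite `E`-length, and the difference of the lengths is
`Σ x_i |M_i|_E - Σ_α x_{s α} |M_{t α}|_E = ⟨dim X, Dim M⟩`. -/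
theorem endo_length_hom_sub_ext (k : Type) [Field k] (Q : FinQuiver) (hQ : Q.Acyclic)
    (M : QRep k Q) (hM : IsFiniteLength (REnd M) (∀ i, M.M i))
    (X : QRep k Q) [∀ i, FiniteDimensional k (X.M i)]
    (d : Q.V → ℕ) (hd : ∀ i, mlength (REnd M) (M.M i) = (d i : ℕ∞)) :
    IsFiniteLength (REnd M) (LinearMap.ker (deltaE X M)) ∧
    IsFiniteLength (REnd M)
      ((∀ a : Q.A, X.M (Q.s a) →ₗ[k] M.M (Q.t a)) ⧸ LinearMap.range (deltaE X M)) ∧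
    ∃ h e : ℕ,
      mlength (REnd M) (LinearMap.ker (deltaE X M)) = (h : ℕ∞) ∧
      mlength (REnd M)
        ((∀ a : Q.A, X.M (Q.s a) →ₗ[k] M.M (Q.t a)) ⧸ LinearMap.range (deltaE X M)) =
        (e : ℕ∞) ∧
      (h : ℤ) - (e : ℤ) = (∑ i : Q.V, dimVec X i * (d i : ℤ)) -
        ∑ a : Q.A, dimVec X (Q.s a) * (d (Q.t a) : ℤ) :=
  endo_length_hom_sub_ext_general k Q M X d hd
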